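/- arXiv:1703.01586 — 4 statements merged into one kernel-verified Lean document; each statement's English description precedes it below -/
import Mathlib

section
/- Let S ⊆ {0,1}^n be the set of all binary words with at most s switches, where the number of switches of x = x_1…x_n is |{i : 1 ≤ i ≤ n−1, x_i ≠ x_{i+1}}|. Then the VC-dimension of S (and hence of any subset of S) is at most s + 1. -/
/-!
If `C` shatters `I = {i₀ < i₁ < ⋯ < i_k}`, some `x ∈ C` takes alternating values
`x i₀ ≠ x i₁ ≠ ⋯ ≠ x i_k`. Each interval `[i_j, i_{j+1})` then contains a switch of `x`,
so the number of switches of `x` before `i_j` grows strictly with `j`, and `x` has at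
least `k` switches.
-/

def Shatters {n : ℕ} (C : Finset (Fin n → Bool)) (I : Finset (Fin n)) : Prop :=
  ∀ p : Fin n → Bool, ∃ x ∈ C, ∀ i ∈ I, x i = p i

/-- The number of switches of a binary word: the number of indices `i` with
`1 ≤ i ≤ n-1` (0-indexed: `i+1 < n`) such that `x_i ≠ x_{i+1}`. -/
def switches {n : ℕ} (x : Fin n → Bool) : ℕ :=
  (Finset.univ.filter fun p : Fin n × Fin n => (p.2 : ℕ) = (p.1 : ℕ) + 1 ∧ x p.1 ≠ x p.2).card

def switchesBelow (y : ℕ → Bool) (m : ℕ) : ℕ :=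
  ((Finset.range m).filter fun i => y i ≠ y (i + 1)).card

theorem exists_switch_of_ne {y : ℕ → Bool} {a b : ℕ} (hab : a ≤ b) (hy : y a ≠ y b) :
    ∃ c, a ≤ c ∧ c < b ∧ y c ≠ y (c + 1) := by
  by_contra! hconst
  have hconst' : ∀ c, a ≤ c → c ≤ b → y a = y c := by
    intro c hac
    induction c, hac using Nat.le_induction with
    | base => exact fun _ => rfl
    | succ c hac ih => exact fun hcb => (ih (Nat.le_of_succ_le hcb)).trans (hconst c hac hcb)
  exact hy (hconst' b hab le_rfl)

theorem switchesBelow_lt_of_ne {y : ℕ → Bool} {a b : ℕ} (hab : a ≤ b) (hy : y a ≠ y b) :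
    switchesBelow y a < switchesBelow y b := by
  obtain ⟨c, hac, hcb, hc⟩ := exists_switch_of_ne hab hy
  refine Finset.card_lt_card <| (Finset.ssubset_iff_of_subset ?_).2 ⟨c, ?_, ?_⟩
  · exact Finset.filter_subset_filter _ (Finset.range_subset_range.2 hab)
  · simp [hcb, hc]
  · simp [hac]

theorem le_switchesBelow_of_alternating {y : ℕ → Bool} {k : ℕ} {a : Fin (k + 1) → ℕ}
    (ha : StrictMono a) (halt : ∀ j : Fin k, y (a j.castSucc) ≠ y (a j.succ)) :
    k ≤ switchesBelow y (a (Fin.last k)) := by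
  suffices h : ∀ j : Fin (k + 1), (j : ℕ) ≤ switchesBelow y (a j) from h (Fin.last k)
  refine Fin.induction (Nat.zero_le _) fun j ih => ?_
  have := switchesBelow_lt_of_ne (ha Fin.castSucc_lt_succ).le (halt j)
  simp only [Fin.val_succ, Fin.val_castSucc] at ih ⊢
  omega

def natWord {n : ℕ} (x : Fin n → Bool) (c : ℕ) : Bool :=
  if h : c < n then x ⟨c, h⟩ else false

@[simp]
theorem natWord_apply {n : ℕ} (x : Fin n → Bool) (i : Fin n) : natWord x i = x i := by
  simp [natWord]

theorem switchesBelow_natWord_le {n m : ℕ} (x : Fin n → Bool) (hm : m < n) :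
    switchesBelow (natWord x) m ≤ switches x := by
  refine Finset.card_le_card_of_surjOn (fun p : Fin n × Fin n => (p.1 : ℕ)) fun c hc => ?_
  simp only [Finset.coe_filter, Finset.mem_range, Set.mem_ofPred_eq] at hc
  have hc1 : c + 1 < n := by omega
  refine ⟨(⟨c, by omega⟩, ⟨c + 1, hc1⟩), ?_, rfl⟩
  simpa [natWord, hc1, show c < n by omega] using hc.2

theorem Shatters.exists_alternating {n k : ℕ} {C : Finset (Fin n → Bool)} {I : Finset (Fin n)}
    (hI : Shatters C I) (hk : I.card = k + 1) :
    ∃ x ∈ C, ∃ a : Fin (k + 1) → Fin n, StrictMono a ∧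
      ∀ j : Fin k, x (a j.castSucc) ≠ x (a j.succ) := by
  classical
  set e := I.orderIsoOfFin hk
  obtain ⟨x, hxC, hx⟩ := hI fun i => if h : i ∈ I then decide (Even (e.symm ⟨i, h⟩ : ℕ)) else false
  have hxe : ∀ j, x (e j) = decide (Even (j : ℕ)) := fun j => by
    simp [hx _ (e j).2]
  refine ⟨x, hxC, fun j => e j, fun i j hij => e.strictMono hij, fun j => ?_⟩
  by_cases hj : Even (j : ℕ) <;> simp [hxe, Nat.even_add_one, hj]

/-- Any set of binary words, each with at most `s` switches, has VC-dimension
at most `s + 1`. -/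
theorem vcDim_switches {n s : ℕ} (C : Finset (Fin n → Bool))
    (hC : ∀ x ∈ C, switches x ≤ s) :
    ∀ I : Finset (Fin n), Shatters C I → I.card ≤ s + 1 := by
  intro I hI
  cases hk : I.card with
  | zero => omega
  | succ k =>
    obtain ⟨x, hxC, a, ha, halt⟩ := hI.exists_alternating hk
    refine Nat.succ_le_succ ?_
    calc k ≤ switchesBelow (natWord x) (a (Fin.last k)) :=
          le_switchesBelow_of_alternating (y := natWord x) (a := fun j => a j)
            (Fin.val_strictMono.comp ha) (by simpa using halt)
      _ ≤ switches x := switchesBelow_natWord_le x (a _).isLt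
      _ ≤ s := hC x hxC
end

section
/- Let S ⊆ {0,1}^n, and for 0 ≤ r ≤ n let B_S(r) = {(w, w') ∈ S × S : dist(w, w') ≤ r}. Then there exists a code M ⊆ S with minimum distance at least Δ and |M| ≥ |S|² / (4·|B_S(Δ − 1)|). -/
/-!
Greedy selection: pick any word, discard its Hamming ball of radius `Δ - 1`, and repeat. Each
step discards at most as many words as the largest ball, so this only gives a good code on the
words whose ball in `S` is small. By Markov's inequality at least half of `S` has a ball of size
at most twice the average `|B_S(Δ - 1)| / |S|`; running the greedy procedure on that half yields
`|M| ≥ (|S| / 2) / (2 |B_S(Δ - 1)| / |S|)`.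
-/

open Finset

namespace Finset

variable {α : Type*}

theorem card_filter_product_eq_sum_card_filter {β : Type*} (s : Finset α) (t : Finset β)
    (r : α → β → Prop) [DecidableRel r] :
    #{p ∈ s ×ˢ t | r p.1 p.2} = ∑ x ∈ s, #{y ∈ t | r x y} := by
  simp only [card_filter, sum_product]

theorem card_le_two_mul_card_filter_le_two_mul_avg (s : Finset α) (f : α → ℕ) :
    #s ≤ 2 * #{x ∈ s | f x ≤ 2 * (∑ x ∈ s, f x) / #s} := by
  rcases s.eq_empty_or_nonempty with rfl | hs
  · simp
  set k := 2 * (∑ x ∈ s, f x) / #s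
  have hlarge : #{x ∈ s | ¬f x ≤ k} * (k + 1) ≤ ∑ x ∈ s, f x :=
    calc #{x ∈ s | ¬f x ≤ k} * (k + 1) ≤ ∑ x ∈ s with ¬f x ≤ k, f x :=
          smul_eq_mul (α := ℕ) .. ▸ card_nsmul_le_sum _ _ _ fun x hx => by
            rw [mem_filter] at hx; omega
      _ ≤ ∑ x ∈ s, f x := sum_le_sum_of_subset (filter_subset _ _)
  have hk : 2 * ∑ x ∈ s, f x < #s * (k + 1) := Nat.lt_mul_div_succ _ hs.card_pos
  have : 2 * #{x ∈ s | ¬f x ≤ k} < #s :=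
    Nat.lt_of_mul_lt_mul_right (a := k + 1) (by nlinarith)
  have := card_filter_add_card_filter_not (s := s) (f · ≤ k)
  omega

theorem exists_pairwise_not_rel_card_le_card_mul [DecidableEq α] {r : α → α → Prop}
    [DecidableRel r] (hrefl : ∀ x, r x x) (hsymm : ∀ x y, r x y → r y x) {k : ℕ} (t : Finset α)
    (ht : ∀ x ∈ t, #{y ∈ t | r x y} ≤ k) :
    ∃ m ⊆ t, (m : Set α).Pairwise (fun x y => ¬r x y) ∧ #t ≤ #m * k := by
  induction t using strongInduction with
  | H t ih =>
    rcases t.eq_empty_or_nonempty with rfl | ⟨x, hx⟩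
    · exact ⟨∅, empty_subset _, by simp, by simp⟩
    set far := {y ∈ t | ¬r x y}
    have hfar : far ⊂ t :=
      filter_ssubset.2 ⟨x, hx, not_not.2 (hrefl x)⟩
    obtain ⟨m, hmfar, hm, hcard⟩ := ih far hfar fun y hy =>
      (card_le_card (filter_subset_filter _ hfar.subset)).trans (ht y (hfar.subset hy))
    have hfar_not_rel : ∀ y ∈ m, ¬r x y := fun y hy => (mem_filter.1 (hmfar hy)).2
    refine ⟨insert x m, insert_subset hx (hmfar.trans hfar.subset), ?_, ?_⟩
    · rw [coe_insert, Set.pairwise_insert]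
      exact ⟨hm, fun y hy _ => ⟨hfar_not_rel y hy, fun hyx => hfar_not_rel y hy (hsymm y x hyx)⟩⟩
    · have hxm : x ∉ m := fun h => hfar_not_rel x h (hrefl x)
      have := card_filter_add_card_filter_not (s := t) (r x)
      have := ht x hx
      rw [card_insert_of_notMem hxm]
      nlinarith

end Finset

/-- Generalized Gilbert–Varshamov bound of Kolesnik–Krachkovsky: any subset `S`
of the Hamming cube contains a code of minimum distance at least `Δ` and size
at least `|S|² / (4·|B_S(Δ-1)|)`. -/
theorem generalized_gv {n Δ : ℕ} (S : Finset (Fin n → Bool)) :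
    ∃ M ⊆ S,
      (∀ x ∈ M, ∀ y ∈ M, x ≠ y → Δ ≤ hammingDist x y) ∧
      ((S.card : ℚ) ^ 2) /
          (4 * ((S ×ˢ S).filter fun p => hammingDist p.1 p.2 ≤ Δ - 1).card)
        ≤ M.card := by
  set ball := fun x => #{y ∈ S | hammingDist x y ≤ Δ - 1}
  set B := ∑ x ∈ S, ball x
  set T := {x ∈ S | ball x ≤ 2 * B / #S}
  have hST : #S ≤ 2 * #T := card_le_two_mul_card_filter_le_two_mul_avg S ball
  have hk : 2 * B / #S * #S ≤ 2 * B := Nat.div_mul_le_self _ _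
  obtain ⟨M, hMT, hM, hTM⟩ := exists_pairwise_not_rel_card_le_card_mul (fun x => by simp)
    (fun x y h => hammingDist_comm x y ▸ h) T fun x hx =>
      (card_le_card (filter_subset_filter _ (filter_subset _ _))).trans (mem_filter.1 hx).2
  refine ⟨M, hMT.trans (filter_subset _ _), fun x hx y hy hxy => by have := hM hx hy hxy; omega, ?_⟩
  have hcount : #S ^ 2 ≤ #M * (4 * B) := by nlinarith
  rw [card_filter_product_eq_sum_card_filter S S (fun x y => hammingDist x y ≤ Δ - 1)]
  exact div_le_of_le_mul₀ (by positivity) (by positivity) (by exact_mod_cast hcount)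
end

section
/- Let C ⊆ {0,1}^n be a code. If |C| > ∑_{i=0}^{d} C(n,i), then C shatters some coordinate set of size d+1. -/
/-- Contrapositive Sauer–Shelah: a code larger than `∑_{i=0}^{d} C(n,i)`
shatters some coordinate set of size `d + 1`. -/
theorem sauer_shelah_contrapositive {n d : ℕ} (C : Finset (Fin n → Bool))
    (h : ∑ i ∈ Finset.range (d + 1), n.choose i < C.card) :
    ∃ I : Finset (Fin n), I.card = d + 1 ∧ Shatters C I := by
  classical
  by_contra hcon
  push_neg at hcon
  set 𝒜 : Finset (Finset (Fin n)) := C.image (fun x => Finset.univ.filter (fun i => x i = true))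
    with h𝒜
  have hcard : 𝒜.card = C.card := by
    rw [h𝒜, Finset.card_image_of_injective]
    intro x y hxy
    funext i
    have : (i ∈ Finset.univ.filter (fun i => x i = true)) ↔
        (i ∈ Finset.univ.filter (fun i => y i = true)) := by
      simp only at hxy; rw [hxy]
    simp only [Finset.mem_filter, Finset.mem_univ, true_and] at this
    cases hx : x i <;> cases hy : y i <;> simp_all
  have key : ∀ s : Finset (Fin n), 𝒜.Shatters s → Shatters C s := by
    intro s hs p
    obtain ⟨u, hu, hsu⟩ := hs (t := s.filter (fun i => p i = true)) (Finset.filter_subset _ _)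
    rw [h𝒜, Finset.mem_image] at hu
    obtain ⟨x, hx, rfl⟩ := hu
    refine ⟨x, hx, fun i hi => ?_⟩
    have : (i ∈ s ∩ Finset.univ.filter (fun j => x j = true)) ↔
        (i ∈ s.filter (fun j => p j = true)) := by rw [hsu]
    simp only [Finset.mem_inter, Finset.mem_filter, Finset.mem_univ, true_and, hi] at this
    cases hx' : x i <;> cases hp : p i <;> simp_all
  have hvc : 𝒜.vcDim ≤ d := by
    apply Finset.sup_le
    intro s hs
    by_contra hsd
    push_neg at hsd
    obtain ⟨t, hts, htc⟩ := Finset.exists_subset_card_eq (s := s) (n := d + 1) hsd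
    exact hcon t htc (key t ((Finset.mem_shatterer.1 hs).mono_right hts))
  have h1 := (Finset.card_le_card_shatterer 𝒜).trans Finset.card_shatterer_le_sum_vcDim
  rw [hcard] at h1
  have hle : ∑ k ∈ Finset.Iic 𝒜.vcDim, (Fintype.card (Fin n)).choose k ≤
      ∑ k ∈ Finset.Iic d, n.choose k := by
    simp only [Fintype.card_fin]
    exact Finset.sum_le_sum_of_subset (Finset.Iic_subset_Iic.2 hvc)
  have heq : Finset.Iic d = Finset.range (d + 1) := by ext k; simp
  rw [heq] at hle
  omega
end

section
/- For the 2×2 matrix A(x) with entries A_{aa} = A_{bb} = 1 and A_{ab} = A_{ba} = 2^{−x} (x ∈ ℝ), the spectral radius of A(x) equals 2^{−x} + 1, and consequently inf_{x ∈ ℝ} { p·x + log₂(2^{−x} + 1) } = h(p) for 0 ≤ p ≤ 1, where h is the binary entropy function h(p) = −p log₂ p − (1−p) log₂(1−p). -/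
/-!
The eigenvalues of `!![1, t; t, 1]` are `1 ± t`, so for `t = 2^{-x} > 0` the spectral radius
is `1 + t`.

Put `a = b^{-x}`. Then `(p x + logb b (a + 1)) · log b = log (a + 1) - p log a`, which exceeds
`binEntropy p` by the Kullback–Leibler divergence of Bernoulli(`p`) from Bernoulli(`a / (a + 1)`).
By Gibbs' inequality this is nonnegative, and it vanishes at `a = p / (1 - p)`. For `p ∈ {0, 1}`
the infimum is not attained but approached as `x → ±∞`.
-/

open Real

/-- The matrix `A(x)` with unit diagonal and off-diagonal entries `2^{-x}`. -/
noncomputable def A (x : ℝ) : Matrix (Fin 2) (Fin 2) ℝ :=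
  !![1, 2 ^ (-x); 2 ^ (-x), 1]

open Filter Set Topology

theorem Matrix.mem_spectrum_circulant_fin_two_iff {K : Type*} [Field K] (a b μ : K) :
    μ ∈ spectrum K !![a, b; b, a] ↔ μ = a + b ∨ μ = a - b := by
  have hsub : algebraMap K (Matrix (Fin 2) (Fin 2) K) μ - !![a, b; b, a] =
      !![μ - a, -b; -b, μ - a] := by
    ext i j
    fin_cases i <;> fin_cases j <;> simp [Matrix.algebraMap_matrix_apply]
  rw [spectrum.mem_iff, Matrix.isUnit_iff_isUnit_det, isUnit_iff_ne_zero, not_not, hsub,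
    Matrix.det_fin_two_of]
  constructor
  · intro h
    have hroots : (μ - (a + b)) * (μ - (a - b)) = 0 := by linear_combination h
    rcases mul_eq_zero.1 hroots with h | h
    · exact Or.inl (sub_eq_zero.1 h)
    · exact Or.inr (sub_eq_zero.1 h)
  · rintro (rfl | rfl) <;> ring

namespace Real

theorem mul_log_le_mul_log_add_sub {p q : ℝ} (hp : 0 ≤ p) (hq : 0 < q) :
    p * log q ≤ p * log p + (q - p) := by
  rcases hp.eq_or_lt with rfl | hp
  · simpa using hq.le
  have h := mul_le_mul_of_nonneg_left (log_le_sub_one_of_pos (div_pos hq hp)) hp.le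
  rw [log_div hq.ne' hp.ne', mul_sub_one, mul_div_cancel₀ q hp.ne'] at h
  linarith

theorem binEntropy_add_mul_log_le_log_add_one {p a : ℝ} (hp0 : 0 ≤ p) (hp1 : p ≤ 1)
    (ha : 0 < a) : binEntropy p + p * log a ≤ log (a + 1) := by
  have h₁ := mul_log_le_mul_log_add_sub hp0 (div_pos ha (by positivity : 0 < a + 1))
  have h₂ := mul_log_le_mul_log_add_sub (sub_nonneg.2 hp1) (by positivity : 0 < (a + 1)⁻¹)
  rw [log_div ha.ne' (by positivity)] at h₁
  rw [log_inv] at h₂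
  have hsum : a / (a + 1) + (a + 1)⁻¹ = 1 := by field_simp
  simp only [binEntropy, log_inv]
  linear_combination h₁ + h₂ + hsum

theorem binEntropy_add_mul_log_div_one_sub {p : ℝ} (hp0 : 0 < p) (hp1 : p < 1) :
    binEntropy p + p * log (p / (1 - p)) = log (p / (1 - p) + 1) := by
  have h1p : 0 < 1 - p := by linarith
  rw [div_add_one h1p.ne', add_sub_cancel, one_div, log_inv, log_div hp0.ne' h1p.ne']
  simp only [binEntropy, log_inv]
  ring

theorem binEntropy_div_log (b p : ℝ) :
    binEntropy p / log b = -(p * logb b p) - (1 - p) * logb b (1 - p) := by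
  simp only [binEntropy, log_inv, logb]
  ring

variable {b : ℝ}

theorem mul_add_logb_rpow_neg_add_one (hb : 1 < b) (p x : ℝ) :
    p * x + logb b (b ^ (-x) + 1) = (log (b ^ (-x) + 1) - p * log (b ^ (-x))) / log b := by
  have hlogb : log b ≠ 0 := (log_pos hb).ne'
  rw [log_rpow (by linarith), logb]
  field_simp
  ring

theorem add_logb_rpow_neg_add_one (hb₀ : 0 < b) (hb₁ : b ≠ 1) (x : ℝ) :
    x + logb b (b ^ (-x) + 1) = logb b (b ^ x + 1) := by
  have hfactor : b ^ x + 1 = b ^ x * (b ^ (-x) + 1) := by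
    rw [mul_add, ← rpow_add hb₀, add_neg_cancel, rpow_zero, mul_one, add_comm]
  rw [hfactor, logb_mul (by positivity) (by positivity), logb_rpow hb₀ hb₁]

theorem tendsto_logb_rpow_add_one_atBot (hb : 1 < b) :
    Tendsto (fun y : ℝ => logb b (b ^ y + 1)) atBot (𝓝 0) := by
  have hlim := (tendsto_rpow_atBot_of_base_gt_one b hb).add_const 1
  rw [zero_add] at hlim
  rw [← logb_one (b := b)]
  exact (continuousAt_logb one_ne_zero).tendsto.comp hlim

theorem binEntropy_div_log_le_mul_add_logb (hb : 1 < b) {p : ℝ} (hp0 : 0 ≤ p) (hp1 : p ≤ 1)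
    (x : ℝ) : binEntropy p / log b ≤ p * x + logb b (b ^ (-x) + 1) := by
  rw [mul_add_logb_rpow_neg_add_one hb]
  have hgibbs := binEntropy_add_mul_log_le_log_add_one hp0 hp1
    (rpow_pos_of_pos (zero_lt_one.trans hb) (-x))
  exact div_le_div_of_nonneg_right (by linarith) (log_pos hb).le

theorem mul_add_logb_eq_binEntropy_div_log (hb : 1 < b) {p : ℝ} (hp0 : 0 < p) (hp1 : p < 1) :
    p * -logb b (p / (1 - p)) + logb b (b ^ (- -logb b (p / (1 - p))) + 1) =
      binEntropy p / log b := by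
  have hpos : 0 < p / (1 - p) := div_pos hp0 (by linarith)
  rw [mul_add_logb_rpow_neg_add_one hb, neg_neg, rpow_logb (by linarith) hb.ne' hpos,
    ← binEntropy_add_mul_log_div_one_sub hp0 hp1, add_sub_cancel_right]

theorem iInf_mul_add_logb_rpow_neg_add_one (hb : 1 < b) {p : ℝ} (hp0 : 0 ≤ p) (hp1 : p ≤ 1) :
    ⨅ x : ℝ, p * x + logb b (b ^ (-x) + 1) = binEntropy p / log b := by
  have hlower := binEntropy_div_log_le_mul_add_logb hb hp0 hp1
  have hbdd : BddBelow (range fun x : ℝ => p * x + logb b (b ^ (-x) + 1)) :=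
    ⟨_, forall_mem_range.2 hlower⟩
  refine le_antisymm ?_ (le_ciInf hlower)
  rcases hp0.eq_or_lt with rfl | hp0
  · have hlim : Tendsto (fun x : ℝ => 0 * x + logb b (b ^ (-x) + 1)) atTop (𝓝 0) := by
      simpa only [zero_mul, zero_add, Function.comp_def] using
        (tendsto_logb_rpow_add_one_atBot hb).comp tendsto_neg_atTop_atBot
    simpa using ge_of_tendsto hlim (Eventually.of_forall (ciInf_le hbdd))
  rcases hp1.eq_or_lt with rfl | hp1
  · have hlim : Tendsto (fun x : ℝ => 1 * x + logb b (b ^ (-x) + 1)) atBot (𝓝 0) := by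
      simpa only [one_mul, add_logb_rpow_neg_add_one (zero_lt_one.trans hb) hb.ne'] using
        tendsto_logb_rpow_add_one_atBot hb
    simpa using ge_of_tendsto hlim (Eventually.of_forall (ciInf_le hbdd))
  · exact ciInf_le_of_le hbdd _ (mul_add_logb_eq_binEntropy_div_log hb hp0 hp1).le

end Real

/-- The spectral radius of `A(x)` is `2^{-x} + 1`, and the Legendre dual of the
log-spectral radius is the binary entropy function. -/
theorem spectral_radius_and_entropy (p : ℝ) (hp0 : 0 ≤ p) (hp1 : p ≤ 1) :
    (∀ x : ℝ, ((2 : ℝ) ^ (-x) + 1) ∈ spectrum ℝ (A x) ∧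
      ∀ μ ∈ spectrum ℝ (A x), |μ| ≤ (2 : ℝ) ^ (-x) + 1) ∧
    (⨅ x : ℝ, p * x + Real.logb 2 ((2 : ℝ) ^ (-x) + 1))
      = -(p * Real.logb 2 p) - (1 - p) * Real.logb 2 (1 - p) := by
  refine ⟨fun x => ⟨?_, fun μ hμ => ?_⟩, ?_⟩
  · rw [A, Matrix.mem_spectrum_circulant_fin_two_iff]
    exact Or.inl (add_comm _ _)
  · rw [A, Matrix.mem_spectrum_circulant_fin_two_iff] at hμ
    have ht : 0 < (2 : ℝ) ^ (-x) := by positivity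
    rcases hμ with rfl | rfl <;> exact abs_le.2 ⟨by linarith, by linarith⟩
  · rw [iInf_mul_add_logb_rpow_neg_add_one one_lt_two hp0 hp1, binEntropy_div_log]
end
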